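/- arXiv:2310.00990 — 3 statements merged into one kernel-verified Lean document; each statement's English description precedes it below -/
import Mathlib

section
/- Let G be a TSO game of group I, i.e. one player X is permitted to update buffer messages after her own moves and the opposing player Y is permitted to update before her own moves (each possibly also at additional times). Suppose σ_X is a positional winning strategy for player X from a configuration c_0. Then the positional strategy σ̄_X defined by σ̄_X(c) = \overline{σ_X(c)} (play σ_X's move and then flush all buffers, using X's right to update after her move) is also a winning strategy for player X from c_0. -/
namespace TSOGames

/-- The data of a (safety) game: a partition of the configurations into those of
player A (`isA`) and those of player B, a transition relation, and final configurations. -/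
structure SGame (C : Type*) where
  isA : C → Prop
  step : C → C → Prop
  final : C → Prop

namespace SGame

variable {C : Type*} (G : SGame C)

/-- The transition relation alternates between the two players' configurations. -/
def Alternating : Prop := ∀ c c', G.step c c' → (G.isA c ↔ ¬ G.isA c')

/-- Every configuration has at least one successor. -/
def DeadlockFree : Prop := ∀ c, ∃ c', G.step c c'

/-- Final configurations belong to player A. -/
def FinalInA : Prop := ∀ c, G.final c → G.isA c

/-- An (infinite) play: consecutive configurations are related by `step`. -/
def IsPlay (ρ : ℕ → C) : Prop := ∀ i, G.step (ρ i) (ρ (i + 1))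

/-- A (history-dependent) strategy `σ`, given the strict history and the current
configuration, chooses a successor; it is valid for the player owning the
configurations satisfying `own` if it always chooses an actual successor. -/
def ValidStrat (own : C → Prop) (σ : List C → C → C) : Prop :=
  ∀ h c, own c → G.step c (σ h c)

/-- A play is consistent with the strategy `σ` of the player owning the
configurations satisfying `own` if at every such configuration the play follows `σ`. -/
def Consistent (own : C → Prop) (σ : List C → C → C) (ρ : ℕ → C) : Prop :=
  ∀ i, own (ρ i) → ρ (i + 1) = σ (List.ofFn fun j : Fin i => ρ j) (ρ i)

/-- A play is winning for player B if it visits a final configuration. -/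
def BWins (ρ : ℕ → C) : Prop := ∃ i, G.final (ρ i)

/-- A play is winning for player A if it never visits a final configuration. -/
def AWinsPlay (ρ : ℕ → C) : Prop := ¬ G.BWins ρ

/-- `σ` is a winning strategy from `c0` for the player owning the configurations
satisfying `own`, whose plays are winning when they satisfy `winPlay`:
it is valid and every play from `c0` consistent with it is winning. -/
def WinningStrat (own : C → Prop) (winPlay : (ℕ → C) → Prop)
    (σ : List C → C → C) (c0 : C) : Prop :=
  G.ValidStrat own σ ∧
    ∀ ρ : ℕ → C, ρ 0 = c0 → G.IsPlay ρ → Consistent own σ ρ → winPlay ρ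

/-- The given player has a winning strategy from `c0`. -/
def Wins (own : C → Prop) (winPlay : (ℕ → C) → Prop) (c0 : C) : Prop :=
  ∃ σ, G.WinningStrat own winPlay σ c0

/-- `c0` is winning for player A. -/
def WinA (c0 : C) : Prop := G.Wins (fun c => G.isA c) G.AWinsPlay c0

/-- `c0` is winning for player B. -/
def WinB (c0 : C) : Prop := G.Wins (fun c => ¬ G.isA c) G.BWins c0

end SGame

/-- Restriction of a game to a subset `D` of its configurations. -/
def restrictGame {C : Type*} (G : SGame C) (D : Set C) : SGame C where
  isA := G.isA
  step := fun c c' => G.step c c' ∧ c ∈ D ∧ c' ∈ D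
  final := fun c => G.final c ∧ c ∈ D

/-- The winning condition on plays for the player encoded by `b` (`true` = player A,
who wins a play iff it avoids the final configurations; `false` = player B). -/
def winPlayOf {C : Type*} (G : SGame C) (b : Bool) : (ℕ → C) → Prop :=
  fun ρ => if b then ¬ G.BWins ρ else G.BWins ρ

end TSOGames
namespace TSOGames

/-- TSO instructions: read, write, skip, and memory fence. -/
inductive Instr (X V : Type*) : Type _
  | read (x : X) (v : V)
  | write (x : X) (v : V)
  | skip
  | fence

/-- Whether an instruction is a read instruction. -/
def Instr.isRead {X V : Type*} : Instr X V → Bool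
  | .read _ _ => true
  | _ => false

/-- A concurrent program: a family of processes indexed by `I`, each a transition
system over local states `S` labeled by instructions over variables `X` and values `V`. -/
structure Program (I S X V : Type*) where
  delta : I → S → Instr X V → S → Prop

/-- A TSO configuration: local states, per-process FIFO store buffers
(newest message at the head, oldest at the end), and the shared memory. -/
structure Conf (I S X V : Type*) where
  st : I → S
  buf : I → List (X × V)
  mem : X → V

section TSO

variable {I S X V : Type*}

/-- The value of the most recent buffered write on `x`, if any
(the buffer stores the newest message first). -/
def bufVal [DecidableEq X] : List (X × V) → X → Option V
  | [], _ => none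
  | (y, v) :: rest, x => if y = x then some v else bufVal rest x

/-- The value process `ι` reads from variable `x`: the most recent buffered write of
`ι` on `x` if there is one, and the memory value otherwise. -/
def readVal [DecidableEq X] (c : Conf I S X V) (ι : I) (x : X) : V :=
  (bufVal (c.buf ι) x).getD (c.mem x)

variable [DecidableEq I] [DecidableEq X]

/-- Execution of one instruction by process `ι` under TSO semantics. -/
inductive InstrStep (P : Program I S X V) (ι : I) (instr : Instr X V) :
    Conf I S X V → Conf I S X V → Prop
  | read (c : Conf I S X V) (x : X) (v : V) (s' : S) :
      instr = Instr.read x v → P.delta ι (c.st ι) (Instr.read x v) s' →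
      readVal c ι x = v →
      InstrStep P ι instr c ⟨Function.update c.st ι s', c.buf, c.mem⟩
  | write (c : Conf I S X V) (x : X) (v : V) (s' : S) :
      instr = Instr.write x v → P.delta ι (c.st ι) (Instr.write x v) s' →
      InstrStep P ι instr c
        ⟨Function.update c.st ι s', Function.update c.buf ι ((x, v) :: c.buf ι), c.mem⟩
  | skip (c : Conf I S X V) (s' : S) :
      instr = Instr.skip → P.delta ι (c.st ι) Instr.skip s' →
      InstrStep P ι instr c ⟨Function.update c.st ι s', c.buf, c.mem⟩
  | fence (c : Conf I S X V) (s' : S) :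
      instr = Instr.fence → P.delta ι (c.st ι) Instr.fence s' → c.buf ι = [] →
      InstrStep P ι instr c ⟨Function.update c.st ι s', c.buf, c.mem⟩

/-- An update step: the oldest buffered message of some process is committed to memory. -/
inductive UpdStep : Conf I S X V → Conf I S X V → Prop
  | mk (c : Conf I S X V) (ι : I) (x : X) (v : V) (w : List (X × V)) :
      c.buf ι = w ++ [(x, v)] →
      UpdStep c ⟨c.st, Function.update c.buf ι w, Function.update c.mem x v⟩

/-- Finitely many update steps. -/
def Upds : Conf I S X V → Conf I S X V → Prop := Relation.ReflTransGen UpdStep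

/-- `flush` maps every configuration `c` to the configuration `c̄` obtained by
updating all buffered messages to the memory: `c →up* c̄` and all buffers of `c̄` are empty. -/
def IsFlush (flush : Conf I S X V → Conf I S X V) : Prop :=
  ∀ c, Upds c (flush c) ∧ ∀ ι, (flush c).buf ι = []

/-- Update steps by a player, if she is allowed to perform them (otherwise nothing happens). -/
def OptUpds (allowed : Bool) (c c' : Conf I S X V) : Prop :=
  if allowed then Upds c c' else c' = c

/-- A move of a player whose permissions to update before resp. after her move are
given by `perm`: optional updates before, one instruction, optional updates after. -/
def Move (P : Program I S X V) (perm : Bool × Bool) (c c' : Conf I S X V) : Prop :=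
  ∃ c1 c2, OptUpds perm.1 c c1 ∧ (∃ ι instr, InstrStep P ι instr c1 c2) ∧
    OptUpds perm.2 c2 c'

/-- The TSO game induced by a program `P`, update permissions
`permA`/`permB` = (may update before her move, may update after her move)
for players A and B, and a set `SF` of final local states. Game configurations are
TSO configurations annotated by `true` (player A's) or `false` (player B's). -/
def tsoGame (P : Program I S X V) (permA permB : Bool × Bool) (SF : Set S) :
    SGame (Conf I S X V × Bool) where
  isA := fun c => c.2 = true
  step := fun c c' =>
    (c.2 = true ∧ c'.2 = false ∧ Move P permA c.1 c'.1) ∨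
    (c.2 = false ∧ c'.2 = true ∧ Move P permB c.1 c'.1)
  final := fun c => c.2 = true ∧ ∃ ι, c.1.st ι ∈ SF

/-- The configurations owned by the player encoded by `b` (`true` = player A). -/
def ownOf (b : Bool) : Conf I S X V × Bool → Prop := fun c => c.2 = b

/-- The total number of buffered messages of a configuration. -/
def totalBuf [Fintype I] (c : Conf I S X V) : ℕ := ∑ ι, (c.buf ι).length

end TSO

end TSOGames
namespace TSOGames

/-! Flushing after one's own moves is harmless when the opponent may update before hers:
whatever the opponent does from a flushed configuration `c̄` she could also have done from
`c`, by first performing the updates that lead to `c̄`. So a play `ρ` following the flushed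
strategy is shadowed by a play `ρ'` following the original strategy, which differs from `ρ`
only in that the opponent's configurations are not flushed. Flushing does not change local
states, so `ρ` and `ρ'` visit final configurations at the same times, and `ρ` is won
because `ρ'` is. -/

namespace SGame

variable {C : Type*} {G : SGame C} {own : C → Prop} {σ f : C → C} {ρ : ℕ → C}

theorem winPlayOf_iff_of_final_iff {ρ' : ℕ → C} (b : Bool)
    (h : ∀ i, G.final (ρ i) ↔ G.final (ρ' i)) : winPlayOf G b ρ ↔ winPlayOf G b ρ' := by
  have hB : G.BWins ρ ↔ G.BWins ρ' := exists_congr h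
  cases b <;> simp only [winPlayOf, hB, Bool.false_eq_true, if_true, if_false]

open Classical in
/-- The play that follows `σ` where `ρ` follows `f ∘ σ`: the configuration reached by an
own move is replaced by the one proposed by `σ`. -/
noncomputable def shadowPlay (own : C → Prop) (σ : C → C) (ρ : ℕ → C) : ℕ → C
  | 0 => ρ 0
  | i + 1 => if own (ρ i) then σ (ρ i) else ρ (i + 1)

theorem shadowPlay_eq_of_own (halt : ∀ c c', own c → G.step c c' → ¬ own c')
    (hplay : G.IsPlay ρ) {i : ℕ} (hi : own (ρ i)) :
    shadowPlay own σ ρ i = ρ i := by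
  cases i with
  | zero => rfl
  | succ j =>
    have hj : ¬ own (ρ j) := fun hj => halt _ _ hj (hplay j) hi
    simp [shadowPlay, hj]

theorem shadowPlay_eq_or_eq_apply (halt : ∀ c c', own c → G.step c c' → ¬ own c')
    (hσ : ∀ c, own c → G.step c (σ c))
    (hρ : Consistent own (fun _ c => f (σ c)) ρ) (i : ℕ) :
    shadowPlay own σ ρ i = ρ i ∨
      ¬ own (shadowPlay own σ ρ i) ∧ ρ i = f (shadowPlay own σ ρ i) := by
  cases i with
  | zero => exact .inl rfl
  | succ j =>
    by_cases hj : own (ρ j)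
    · simp only [shadowPlay, if_pos hj]
      exact .inr ⟨halt _ _ hj (hσ _ hj), hρ j hj⟩
    · simp [shadowPlay, hj]

theorem isPlay_shadowPlay (halt : ∀ c c', own c → G.step c c' → ¬ own c')
    (hσ : ∀ c, own c → G.step c (σ c))
    (hopp : ∀ c d, ¬ own c → G.step (f c) d → G.step c d)
    (hplay : G.IsPlay ρ) (hρ : Consistent own (fun _ c => f (σ c)) ρ) :
    G.IsPlay (shadowPlay own σ ρ) := by
  intro i
  by_cases hi : own (ρ i)
  · rw [shadowPlay_eq_of_own halt hplay hi]
    simpa [shadowPlay, hi] using hσ _ hi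
  · have hnext : shadowPlay own σ ρ (i + 1) = ρ (i + 1) := by simp [shadowPlay, hi]
    rw [hnext]
    rcases shadowPlay_eq_or_eq_apply halt hσ hρ i with heq | ⟨hnot, hf⟩
    · exact heq ▸ hplay i
    · exact hopp _ _ hnot (hf ▸ hplay i)

theorem consistent_shadowPlay (halt : ∀ c c', own c → G.step c c' → ¬ own c')
    (hσ : ∀ c, own c → G.step c (σ c))
    (hρ : Consistent own (fun _ c => f (σ c)) ρ) :
    Consistent own (fun _ c => σ c) (shadowPlay own σ ρ) := by
  intro i hi
  have heq : shadowPlay own σ ρ i = ρ i :=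
    (shadowPlay_eq_or_eq_apply halt hσ hρ i).resolve_right fun h => h.1 hi
  rw [heq] at hi ⊢
  simp [shadowPlay, hi]

theorem WinningStrat.postcompose {c0 : C} (b : Bool)
    (halt : ∀ c c', own c → G.step c c' → ¬ own c')
    (hafter : ∀ c c', own c → G.step c c' → G.step c (f c'))
    (hopp : ∀ c d, ¬ own c → G.step (f c) d → G.step c d)
    (hfinal : ∀ c, G.final (f c) ↔ G.final c)
    (hwin : G.WinningStrat own (winPlayOf G b) (fun _ c => σ c) c0) :
    G.WinningStrat own (winPlayOf G b) (fun _ c => f (σ c)) c0 := by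
  obtain ⟨hσ, hplays⟩ := hwin
  have hσ' : ∀ c, own c → G.step c (σ c) := fun c hc => hσ [] c hc
  refine ⟨fun _ c hc => hafter _ _ hc (hσ' c hc), fun ρ h0 hplay hρ => ?_⟩
  have hfinal_iff : ∀ i, G.final (ρ i) ↔ G.final (shadowPlay own σ ρ i) := fun i => by
    rcases shadowPlay_eq_or_eq_apply halt hσ' hρ i with heq | ⟨_, hf⟩
    · rw [heq]
    · rw [hf, hfinal]
  exact (winPlayOf_iff_of_final_iff b hfinal_iff).2 <|
    hplays _ h0 (isPlay_shadowPlay halt hσ' hopp hplay hρ) (consistent_shadowPlay halt hσ' hρ)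

end SGame

section TSO

variable {I S X V : Type} [DecidableEq I] [DecidableEq X]

theorem Upds.st_eq {c c' : Conf I S X V} (h : Upds c c') : c'.st = c.st := by
  induction h with
  | refl => rfl
  | tail _ hstep ih => cases hstep; exact ih

theorem Move.upds_right {P : Program I S X V} {perm : Bool × Bool} (hp : perm.2 = true)
    {a b b' : Conf I S X V} (h : Move P perm a b) (hb : Upds b b') : Move P perm a b' := by
  obtain ⟨c1, c2, h1, h2, h3⟩ := h
  refine ⟨c1, c2, h1, h2, ?_⟩
  simp only [OptUpds, hp, if_true] at h3 ⊢
  exact h3.trans hb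

theorem Move.upds_left {P : Program I S X V} {perm : Bool × Bool} (hp : perm.1 = true)
    {a a' b : Conf I S X V} (ha : Upds a a') (h : Move P perm a' b) : Move P perm a b := by
  obtain ⟨c1, c2, h1, h2, h3⟩ := h
  refine ⟨c1, c2, ?_, h2, h3⟩
  simp only [OptUpds, hp, if_true] at h1 ⊢
  exact ha.trans h1

theorem tsoGame_step_iff_of_own {P : Program I S X V} {p q : Bool × Bool} {SF : Set S}
    {b : Bool} {c c' : Conf I S X V × Bool} (hc : c.2 = b) :
    (tsoGame P (if b then p else q) (if b then q else p) SF).step c c' ↔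
      c'.2 ≠ b ∧ Move P p c.1 c'.1 := by
  obtain ⟨c, b'⟩ := c
  cases b <;> cases b' <;> simp_all [tsoGame]

theorem tsoGame_step_iff_of_not_own {P : Program I S X V} {p q : Bool × Bool} {SF : Set S}
    {b : Bool} {c c' : Conf I S X V × Bool} (hc : c.2 ≠ b) :
    (tsoGame P (if b then p else q) (if b then q else p) SF).step c c' ↔
      c'.2 = b ∧ Move P q c.1 c'.1 := by
  obtain ⟨c, b'⟩ := c
  cases b <;> cases b' <;> simp_all [tsoGame]

end TSO

/-- Group I: player X may update after her own moves (`permX.2 = true`), player Y may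
update before her own moves (`permY.1 = true`), possibly also at additional times.
If `σX` is a positional winning strategy for player X from `c0`, then the positional
strategy that plays `σX`'s move and then flushes all buffers is also winning for X from `c0`. -/
theorem statement3 {I S X V : Type} [DecidableEq I] [DecidableEq X]
    (P : Program I S X V) (SF : Set S)
    (permX permY : Bool × Bool) (hX : permX.2 = true) (hY : permY.1 = true)
    (xIsA : Bool)
    (G : SGame (Conf I S X V × Bool))
    (hG : G = tsoGame P (if xIsA then permX else permY) (if xIsA then permY else permX) SF)
    (flush : Conf I S X V → Conf I S X V) (hflush : IsFlush flush)
    (c0 : Conf I S X V × Bool)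
    (σX : Conf I S X V × Bool → Conf I S X V × Bool)
    (hwin : G.WinningStrat (ownOf xIsA) (winPlayOf G xIsA) (fun _ c => σX c) c0) :
    G.WinningStrat (ownOf xIsA) (winPlayOf G xIsA)
      (fun _ c => (flush (σX c).1, (σX c).2)) c0 := by
  subst hG
  have hflush_st : ∀ a, (flush a).st = a.st := fun a => Upds.st_eq (hflush a).1
  refine hwin.postcompose (f := fun c => (flush c.1, c.2)) xIsA ?_ ?_ ?_ ?_
  · intro c c' hc h
    exact ((tsoGame_step_iff_of_own hc).1 h).1
  · intro c c' hc h
    obtain ⟨hc', hmove⟩ := (tsoGame_step_iff_of_own hc).1 h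
    exact (tsoGame_step_iff_of_own hc).2 ⟨hc', hmove.upds_right hX (hflush _).1⟩
  · intro c d hc h
    obtain ⟨hd, hmove⟩ := (tsoGame_step_iff_of_not_own (c := (flush c.1, c.2)) hc).1 h
    exact (tsoGame_step_iff_of_not_own hc).2 ⟨hd, Move.upds_left hY (hflush _).1 hmove⟩
  · intro c
    simp only [tsoGame, hflush_st]

end TSOGames
end

section
/- Let G be a TSO game of group I (player X updates after her moves, player Y updates before her moves), let c_0 be a configuration, and let G' be the finite restricted game defined from G and c_0 (Y-configurations with at most one buffered message together with c_0, their G-successors as X-configurations, restricted transitions, restricted final set). If σ'_X is a winning strategy for player X from c_0 in G', then every extension σ_X of σ'_X to a strategy of G is a winning strategy for player X from c_0 in G. -/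
namespace TSOGames

variable {I S X V : Type*}

/-- The Y-configurations of the restricted group-I game: the Y-configurations of `G`
(the player encoded by `xIsA` is X) with at most one buffered message in total,
together with `c0` if `c0` is a Y-configuration. -/
def groupICY [Fintype I] (xIsA : Bool) (c0 : Conf I S X V × Bool) :
    Set (Conf I S X V × Bool) :=
  {c | c.2 = !xIsA ∧ totalBuf c.1 ≤ 1} ∪ {c | c = c0 ∧ c0.2 = !xIsA}

/-- The X-configurations of the restricted group-I game: the `G`-successors of its
Y-configurations, together with `c0` if `c0` is an X-configuration. -/
def groupICX [Fintype I] (G : SGame (Conf I S X V × Bool)) (xIsA : Bool)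
    (c0 : Conf I S X V × Bool) : Set (Conf I S X V × Bool) :=
  {c' | ∃ c ∈ groupICY xIsA c0, G.step c c'} ∪ {c | c = c0 ∧ c0.2 = xIsA}

end TSOGames

/-! Plays from `c0` consistent with `σX` never leave `D`: at X-configurations `σX` agrees with
`σ'X`, which moves inside `D`, and the Y-configurations of `D` are those of `groupICY`, all of
whose `G`-successors were put into `groupICX`. Such a play is therefore a play of `G'`
consistent with `σ'X`, and it visits a final configuration of `G'` iff it visits one of `G`. -/

namespace TSOGames

section Restriction

variable {C : Type*} (G : SGame C) (D : Set C)

theorem restrictGame_bWins_iff {ρ : ℕ → C} (hρ : ∀ i, ρ i ∈ D) :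
    (restrictGame G D).BWins ρ ↔ G.BWins ρ :=
  exists_congr fun i => and_iff_left (hρ i)

theorem winPlayOf_restrictGame_iff {ρ : ℕ → C} (hρ : ∀ i, ρ i ∈ D) (b : Bool) :
    winPlayOf (restrictGame G D) b ρ ↔ winPlayOf G b ρ := by
  cases b <;> simp only [winPlayOf, restrictGame_bWins_iff G D hρ, Bool.false_eq_true, if_false,
    if_true]

variable {G D}

theorem SGame.mem_of_consistent {own : C → Prop} {σ : C → C} {ρ : ℕ → C}
    (hσ : ∀ c ∈ D, own c → σ c ∈ D) (hclosed : ∀ c ∈ D, ¬ own c → ∀ c', G.step c c' → c' ∈ D)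
    (h0 : ρ 0 ∈ D) (hplay : G.IsPlay ρ) (hcons : SGame.Consistent own (fun _ c => σ c) ρ) :
    ∀ i, ρ i ∈ D
  | 0 => h0
  | i + 1 => by
    have hi := SGame.mem_of_consistent hσ hclosed h0 hplay hcons i
    by_cases hown : own (ρ i)
    · rw [hcons i hown]
      exact hσ _ hi hown
    · exact hclosed _ hi hown _ (hplay i)

theorem winningStrat_of_restrictGame {own : C → Prop} {b : Bool} {σ' σ : C → C} {c0 : C}
    (hc0 : c0 ∈ D) (hclosed : ∀ c ∈ D, ¬ own c → ∀ c', G.step c c' → c' ∈ D)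
    (hwin' : (restrictGame G D).WinningStrat (fun c => own c ∧ c ∈ D)
      (winPlayOf (restrictGame G D) b) (fun _ c => σ' c) c0)
    (hext : ∀ c, own c → c ∈ D → σ c = σ' c) (hvalid : G.ValidStrat own (fun _ c => σ c)) :
    G.WinningStrat own (winPlayOf G b) (fun _ c => σ c) c0 := by
  obtain ⟨hvalid', hplays'⟩ := hwin'
  refine ⟨hvalid, fun ρ h0 hplay hcons => ?_⟩
  have hσ : ∀ c ∈ D, own c → σ c ∈ D := fun c hc hown =>
    hext c hown hc ▸ (hvalid' [] c ⟨hown, hc⟩).2.2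
  have hρD := SGame.mem_of_consistent hσ hclosed (h0 ▸ hc0) hplay hcons
  have hplay' : (restrictGame G D).IsPlay ρ := fun i => ⟨hplay i, hρD i, hρD (i + 1)⟩
  have hcons' : SGame.Consistent (fun c => own c ∧ c ∈ D) (fun _ c => σ' c) ρ :=
    fun i ⟨hown, hi⟩ => (hcons i hown).trans (hext _ hown hi)
  exact (winPlayOf_restrictGame_iff G D hρD b).1 (hplays' ρ h0 hplay' hcons')

end Restriction

section GroupI

variable {I S X V : Type*}

theorem tsoGame_step_snd [DecidableEq I] [DecidableEq X] {P : Program I S X V}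
    {permA permB : Bool × Bool} {SF : Set S} {c c' : Conf I S X V × Bool}
    (h : (tsoGame P permA permB SF).step c c') : c'.2 = !c.2 := by
  rcases h with ⟨h1, h2, -⟩ | ⟨h1, h2, -⟩ <;> simp [h1, h2]

variable [Fintype I] {G : SGame (Conf I S X V × Bool)} {xIsA : Bool}
  {c0 c c' : Conf I S X V × Bool}

theorem snd_of_mem_groupICY (hc : c ∈ groupICY xIsA c0) : c.2 = !xIsA := by
  rcases hc with ⟨h, -⟩ | ⟨rfl, h⟩ <;> exact h

theorem snd_of_mem_groupICX (hG : ∀ c c', G.step c c' → c'.2 = !c.2)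
    (hc : c ∈ groupICX G xIsA c0) : c.2 = xIsA := by
  rcases hc with ⟨d, hd, hstep⟩ | ⟨rfl, h⟩
  · rw [hG d c hstep, snd_of_mem_groupICY hd, Bool.not_not]
  · exact h

theorem self_mem_groupICX_union_groupICY :
    c0 ∈ groupICX G xIsA c0 ∪ groupICY xIsA c0 := by
  by_cases h : c0.2 = xIsA
  · exact Or.inl (Or.inr ⟨rfl, h⟩)
  · exact Or.inr (Or.inr ⟨rfl, Bool.eq_not.mpr h⟩)

theorem groupIC_step_mem (hG : ∀ c c', G.step c c' → c'.2 = !c.2)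
    (hc : c ∈ groupICX G xIsA c0 ∪ groupICY xIsA c0) (hY : c.2 ≠ xIsA) (hstep : G.step c c') :
    c' ∈ groupICX G xIsA c0 ∪ groupICY xIsA c0 := by
  rcases hc with hc | hc
  · exact absurd (snd_of_mem_groupICX hG hc) hY
  · exact Or.inl (Or.inl ⟨c, hc, hstep⟩)

end GroupI

theorem statement5_general {I S X V : Type} [DecidableEq I] [DecidableEq X] [Fintype I]
    (P : Program I S X V) (SF : Set S)
    (permX permY : Bool × Bool)
    (xIsA : Bool)
    (G : SGame (Conf I S X V × Bool))
    (hG : G = tsoGame P (if xIsA then permX else permY) (if xIsA then permY else permX) SF)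
    (c0 : Conf I S X V × Bool)
    (D : Set (Conf I S X V × Bool))
    (hD : D = groupICX G xIsA c0 ∪ groupICY xIsA c0)
    (G' : SGame (Conf I S X V × Bool)) (hG' : G' = restrictGame G D)
    (σ'X σX : Conf I S X V × Bool → Conf I S X V × Bool)
    (hwin' : G'.WinningStrat (fun c => c.2 = xIsA ∧ c ∈ D) (winPlayOf G' xIsA)
      (fun _ c => σ'X c) c0)
    (hext : ∀ c, c.2 = xIsA → c ∈ D → σX c = σ'X c)
    (hvalid : G.ValidStrat (ownOf xIsA) (fun _ c => σX c)) :
    G.WinningStrat (ownOf xIsA) (winPlayOf G xIsA) (fun _ c => σX c) c0 := by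
  subst hG hD hG'
  exact winningStrat_of_restrictGame self_mem_groupICX_union_groupICY
    (fun _ hc hY _ => groupIC_step_mem (fun _ _ => tsoGame_step_snd) hc hY) hwin' hext hvalid

/-- Group I: if `σ'X` is a winning strategy for player X from `c0` in the restricted
finite game `G'`, then every extension of `σ'X` to a strategy of `G` (a valid strategy of
`G` agreeing with `σ'X` on the X-configurations of `G'`) is winning for X from `c0` in `G`. -/
theorem statement5 {I S X V : Type} [DecidableEq I] [DecidableEq X] [Fintype I]
    (P : Program I S X V) (SF : Set S)
    (permX permY : Bool × Bool) (hX : permX.2 = true) (hY : permY.1 = true)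
    (xIsA : Bool)
    (G : SGame (Conf I S X V × Bool))
    (hG : G = tsoGame P (if xIsA then permX else permY) (if xIsA then permY else permX) SF)
    (c0 : Conf I S X V × Bool)
    (D : Set (Conf I S X V × Bool))
    (hD : D = groupICX G xIsA c0 ∪ groupICY xIsA c0)
    (G' : SGame (Conf I S X V × Bool)) (hG' : G' = restrictGame G D)
    (σ'X σX : Conf I S X V × Bool → Conf I S X V × Bool)
    (hwin' : G'.WinningStrat (fun c => c.2 = xIsA ∧ c ∈ D) (winPlayOf G' xIsA)
      (fun _ c => σ'X c) c0)
    (hext : ∀ c, c.2 = xIsA → c ∈ D → σX c = σ'X c)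
    (hvalid : G.ValidStrat (ownOf xIsA) (fun _ c => σX c)) :
    G.WinningStrat (ownOf xIsA) (winPlayOf G xIsA) (fun _ c => σX c) c0 :=
  statement5_general P SF permX permY xIsA G hG c0 D hD G' hG' σ'X σX hwin' hext hvalid

end TSOGames
end

section
/- Let P be a concurrent program under TSO semantics. For all TSO configurations c_1, c_2, c_3, every process ι, and every instruction instr: if c_1 →(instr_ι) c_2 and c_1 ≡ c_3 (c_1 and c_3 are view-equivalent), then there exists a TSO configuration c_4 such that c_3 →(instr_ι) c_4 and c_2 ≡ c_4. -/
namespace TSOGames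

/-- The view of the processes on a TSO configuration: the global state, the value each
process reads from each variable, and whether each process can execute a memory fence
(i.e. whether its buffer is empty). -/
structure View (I S X V : Type*) where
  st : I → S
  val : I → X → V
  fence : I → Bool

variable {I S X V : Type*}

/-- The view of a TSO configuration. -/
def view [DecidableEq X] (c : Conf I S X V) : View I S X V where
  st := c.st
  val := fun ι x => readVal c ι x
  fence := fun ι => (c.buf ι).isEmpty

end TSOGames
namespace TSOGames

/-! The view after an instruction step is a function of the view before it, and whether an
instruction is enabled depends only on the view: a read needs the value the process reads,
a fence an empty buffer. So view-equivalent configurations simulate each other step by step. -/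

open Function

variable {I S X V : Type*} [DecidableEq X]

def View.write [DecidableEq I] (w : View I S X V) (ι : I) (x : X) (v : V) (s : S) :
    View I S X V where
  st := update w.st ι s
  val := update w.val ι (update (w.val ι) x v)
  fence := update w.fence ι false

theorem view_update_st [DecidableEq I] (c : Conf I S X V) (ι : I) (s : S) :
    view ⟨update c.st ι s, c.buf, c.mem⟩ = { view c with st := update (view c).st ι s } :=
  rfl

theorem view_write [DecidableEq I] (c : Conf I S X V) (ι : I) (x : X) (v : V) (s : S) :
    view ⟨update c.st ι s, update c.buf ι ((x, v) :: c.buf ι), c.mem⟩ =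
      (view c).write ι x v s := by
  simp only [view, View.write, View.mk.injEq]
  refine ⟨trivial, funext fun κ => funext fun y => ?_, funext fun κ => ?_⟩
  · rcases eq_or_ne κ ι with rfl | hκ
    · rcases eq_or_ne y x with rfl | hxy
      · simp [readVal, bufVal]
      · simp [readVal, bufVal, Ne.symm hxy, hxy]
    · simp [readVal, hκ]
  · rcases eq_or_ne κ ι with rfl | hκ <;> simp [*]

theorem readVal_eq_of_view_eq {c c' : Conf I S X V} (h : view c = view c') (ι : I) (x : X) :
    readVal c ι x = readVal c' ι x :=
  congrFun (congrFun (congrArg View.val h) ι) x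

theorem buf_eq_nil_iff_of_view_eq {c c' : Conf I S X V} (h : view c = view c') (ι : I) :
    c.buf ι = [] ↔ c'.buf ι = [] := by
  have hfence : (c.buf ι).isEmpty = (c'.buf ι).isEmpty := congrFun (congrArg View.fence h) ι
  rw [← List.isEmpty_iff, ← List.isEmpty_iff, hfence]

/-- If `c1 →(instr_ι) c2` and `c1` is view-equivalent to `c3`, then there is a `c4`
with `c3 →(instr_ι) c4` and `c2` view-equivalent to `c4`. -/
theorem statement13 {I S X V : Type} [DecidableEq I] [DecidableEq X]
    (P : Program I S X V) (c1 c2 c3 : Conf I S X V) (ι : I) (instr : Instr X V)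
    (h12 : InstrStep P ι instr c1 c2) (h13 : view c1 = view c3) :
    ∃ c4 : Conf I S X V, InstrStep P ι instr c3 c4 ∧ view c2 = view c4 := by
  have hst : c1.st = c3.st := congrArg View.st h13
  cases h12 with
  | read x v s' hi hd hr =>
    exact ⟨_, .read c3 x v s' hi (hst ▸ hd) (readVal_eq_of_view_eq h13 ι x ▸ hr),
      by rw [view_update_st, view_update_st, h13]⟩
  | write x v s' hi hd =>
    exact ⟨_, .write c3 x v s' hi (hst ▸ hd), by rw [view_write, view_write, h13]⟩
  | skip s' hi hd =>
    exact ⟨_, .skip c3 s' hi (hst ▸ hd), by rw [view_update_st, view_update_st, h13]⟩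
  | fence s' hi hd hb =>
    exact ⟨_, .fence c3 s' hi (hst ▸ hd) ((buf_eq_nil_iff_of_view_eq h13 ι).1 hb),
      by rw [view_update_st, view_update_st, h13]⟩

end TSOGames
end
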